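/- arXiv:2203.10241 — 5 statements merged into one kernel-verified Lean document; each statement's English description precedes it below -/
import Mathlib

section
/- Let γ be a directed circular arc in ℝ³ of angular span at most π/2, with endpoints p and q, and let h be a plane such that p and q lie strictly on the same side of h. Suppose γ crosses h. Then, orienting the tangent lines of γ at p and at q in the direction of traversal of γ (at p) and opposite to the direction of traversal (at q), both tangent directions form an acute angle with the unit normal of h pointing from the side containing p and q to the other side. -/
open scoped RealInnerProductSpace

/-- Point on the circle with center `o`, radius `r`, in the plane spanned by the
orthonormal pair `u, v`, at angle `θ`. A directed circular arc is the image of an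
interval `[0, α]` under this parametrization. -/
noncomputable def arcPt (o u v : EuclideanSpace ℝ (Fin 3)) (r θ : ℝ) :
    EuclideanSpace ℝ (Fin 3) :=
  o + (r * Real.cos θ) • u + (r * Real.sin θ) • v

private lemma key_arc (α d A B c θ : ℝ) (hα : 0 < α) (hα' : α ≤ Real.pi / 2)
    (h0 : d + A < c) (h1 : d + A * Real.cos α + B * Real.sin α < c)
    (hθ0 : 0 ≤ θ) (hθα : θ ≤ α)
    (hθ : c < d + A * Real.cos θ + B * Real.sin θ) : 0 < B := by
  have hπ := Real.pi_pos
  have hsα : 0 < Real.sin α := Real.sin_pos_of_pos_of_lt_pi hα (by linarith)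
  have hs1 : 0 ≤ Real.sin (α - θ) :=
    Real.sin_nonneg_of_nonneg_of_le_pi (by linarith) (by linarith)
  have hs2 : 0 ≤ Real.sin θ :=
    Real.sin_nonneg_of_nonneg_of_le_pi hθ0 (by linarith)
  have hc2 : 0 ≤ Real.cos θ := Real.cos_nonneg_of_mem_Icc ⟨by linarith, by linarith⟩
  have hc2' : Real.cos θ ≤ 1 := Real.cos_le_one θ
  have hc1' : Real.cos (α - θ) ≤ 1 := Real.cos_le_one _
  have hid : Real.sin (α - θ) = Real.sin α * Real.cos θ - Real.cos α * Real.sin θ :=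
    Real.sin_sub α θ
  have hid2 : Real.sin α
      = Real.sin (α - θ) * Real.cos θ + Real.cos (α - θ) * Real.sin θ := by
    have h := Real.sin_add (α - θ) θ
    rw [sub_add_cancel] at h
    linarith
  have ht : Real.sin α ≤ Real.sin (α - θ) + Real.sin θ := by
    nlinarith [mul_nonneg hs1 (sub_nonneg.2 hc2'), mul_nonneg hs2 (sub_nonneg.2 hc1')]
  -- the center is strictly on the same side as the endpoints: d < c
  have hdc : d < c := by
    by_contra h
    push_neg at h
    nlinarith [mul_le_mul_of_nonneg_left h0.le hs1,
      mul_le_mul_of_nonneg_left h1.le hs2,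
      mul_lt_mul_of_pos_left hθ hsα,
      mul_nonneg (sub_nonneg.2 ht) (sub_nonneg.2 h)]
  -- now conclude B > 0
  by_contra hB
  push_neg at hB
  have hBs : B * Real.sin θ ≤ 0 := mul_nonpos_of_nonpos_of_nonneg hB hs2
  rcases le_or_gt A 0 with hA | hA
  · nlinarith [mul_nonpos_of_nonpos_of_nonneg hA hc2]
  · nlinarith [mul_le_mul_of_nonneg_left hc2' hA.le]

/-- If a directed circular arc `γ` of angular span at most `π/2` has both endpoints
strictly on the side `{x | ⟪n,x⟫ < c}` of the plane `h = {x | ⟪n,x⟫ = c}` (so that the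
unit normal `n` points from the side containing the endpoints to the other side), and
`γ` crosses `h`, then the tangent direction at `p` (in the direction of traversal,
namely `v`) and the tangent direction at `q` opposite to the traversal
(namely `sin α • u - cos α • v`) both form an acute angle with `n`. -/
theorem stmt0 (o u v n : EuclideanSpace ℝ (Fin 3)) (r α c : ℝ)
    (hr : 0 < r) (hu : ‖u‖ = 1) (hv : ‖v‖ = 1) (huv : ⟪u, v⟫ = 0)
    (hα : 0 < α) (hα' : α ≤ Real.pi / 2)
    (hn : ‖n‖ = 1)
    (hp : ⟪n, arcPt o u v r 0⟫ < c)
    (hq : ⟪n, arcPt o u v r α⟫ < c)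
    (hcross : ∃ θ ∈ Set.Icc (0:ℝ) α, c < ⟪n, arcPt o u v r θ⟫) :
    0 < ⟪n, v⟫ ∧ 0 < ⟪n, Real.sin α • u - Real.cos α • v⟫ := by
  obtain ⟨θ, ⟨hθ0, hθα⟩, hθ⟩ := hcross
  set d := ⟪n, o⟫ with hd
  set A := r * ⟪n, u⟫ with hA
  set B := r * ⟪n, v⟫ with hB
  have harc : ∀ φ : ℝ, ⟪n, arcPt o u v r φ⟫ = d + A * Real.cos φ + B * Real.sin φ := by
    intro φ
    simp only [arcPt, inner_add_right, real_inner_smul_right, hd, hA, hB]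
    ring
  rw [harc] at hp hq hθ
  simp only [Real.cos_zero, Real.sin_zero, mul_one, mul_zero, add_zero] at hp
  -- first conclusion
  have hBpos : 0 < B := key_arc α d A B c θ hα hα' hp hq hθ0 hθα hθ
  have h1 : 0 < ⟪n, v⟫ := by
    rw [hB] at hBpos
    by_contra h
    push_neg at h
    nlinarith
  refine ⟨h1, ?_⟩
  -- second conclusion: apply the key lemma to the reversed arc
  have hq' : d + (A * Real.cos α + B * Real.sin α) < c := by linarith
  have hp' : d + (A * Real.cos α + B * Real.sin α) * Real.cos α
      + (A * Real.sin α - B * Real.cos α) * Real.sin α < c := by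
    have heq : d + (A * Real.cos α + B * Real.sin α) * Real.cos α
        + (A * Real.sin α - B * Real.cos α) * Real.sin α = d + A := by
      linear_combination A * Real.sin_sq_add_cos_sq α
    rw [heq]; exact hp
  have hθ' : c < d + (A * Real.cos α + B * Real.sin α) * Real.cos (α - θ)
      + (A * Real.sin α - B * Real.cos α) * Real.sin (α - θ) := by
    have heq : d + (A * Real.cos α + B * Real.sin α) * Real.cos (α - θ)
        + (A * Real.sin α - B * Real.cos α) * Real.sin (α - θ)
        = d + A * Real.cos θ + B * Real.sin θ := by
      rw [Real.cos_sub, Real.sin_sub]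
      linear_combination (A * Real.cos θ + B * Real.sin θ) * Real.sin_sq_add_cos_sq α
    rw [heq]; exact hθ
  have hB'pos : 0 < A * Real.sin α - B * Real.cos α :=
    key_arc α d (A * Real.cos α + B * Real.sin α) (A * Real.sin α - B * Real.cos α) c
      (α - θ) hα hα' hq' hp' (by linarith) (by linarith) hθ'
  have : ⟪n, Real.sin α • u - Real.cos α • v⟫
      = Real.sin α * ⟪n, u⟫ - Real.cos α * ⟪n, v⟫ := by
    rw [inner_sub_right, real_inner_smul_right, real_inner_smul_right]
  rw [this]
  rw [hA, hB] at hB'pos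
  nlinarith [hB'pos]
end

section
/- Let γ be a directed circular arc in ℝ³ and h a plane. Suppose γ starts at a point p lying strictly on one side of h with tangent direction at p parallel to h, and ends at a point q lying strictly on the other side of h with tangent direction at q (in the direction of traversal) forming an obtuse angle with the normal of h pointing from the side of p to the side of q (i.e., pointing away from h). Then the angular span of γ is strictly greater than π. -/
open scoped RealInnerProductSpace

/-- If a directed circular arc starts at `p = arcPt o u v r 0`, strictly on one side of
the plane `h = {x | ⟪n,x⟫ = c}`, with tangent direction `v` at `p` parallel to `h`, and
ends at `q = arcPt o u v r α`, strictly on the other side of `h`, with tangent direction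
`(-sin α) • u + cos α • v` at `q` (in the direction of traversal) forming an obtuse angle
with the unit normal `n` of `h` pointing from the side of `p` to the side of `q`, then
the angular span `α` of the arc is strictly greater than `π`. -/
theorem stmt1 (o u v n : EuclideanSpace ℝ (Fin 3)) (r α c : ℝ)
    (hr : 0 < r) (hu : ‖u‖ = 1) (hv : ‖v‖ = 1) (huv : ⟪u, v⟫ = 0)
    (hα : 0 < α) (hn : ‖n‖ = 1)
    (hp : ⟪n, arcPt o u v r 0⟫ < c)
    (hq : c < ⟪n, arcPt o u v r α⟫)
    (htanp : ⟪n, v⟫ = 0)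
    (htanq : ⟪n, (-Real.sin α) • u + Real.cos α • v⟫ < 0) :
    Real.pi < α := by
  simp only [arcPt, inner_add_right, real_inner_smul_right, htanp, Real.cos_zero,
    Real.sin_zero, mul_zero, mul_one, add_zero] at hp hq htanq
  -- hp : ⟪n,o⟫ + r * ⟪n,u⟫ < c ; hq : c < ⟪n,o⟫ + r * cos α * ⟪n,u⟫
  -- htanq : -sin α * ⟪n,u⟫ < 0
  have hkey : r * Real.cos α * ⟪n, u⟫ - r * ⟪n, u⟫ > 0 := by linarith
  have hprod : (Real.cos α - 1) * ⟪n, u⟫ > 0 := by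
    by_contra hle
    push_neg at hle
    nlinarith
  have hcos : Real.cos α - 1 ≤ 0 := by
    have := Real.cos_le_one α; linarith
  have hnu : ⟪n, u⟫ < 0 := by
    rcases lt_trichotomy (⟪n, u⟫) 0 with h | h | h
    · exact h
    · simp [h] at hprod
    · nlinarith
  have hsin : Real.sin α < 0 := by nlinarith
  by_contra hle
  push_neg at hle
  have := Real.sin_nonneg_of_nonneg_of_le_pi hα.le hle
  linarith
end

section
/- Let Δ and Δ' be two closed triangles in ℝ³ lying in distinct non-parallel planes, such that no vertex of either triangle lies on the plane of the other. If Δ ∩ Δ' is nonempty, then Δ ∩ Δ' is a closed line segment (possibly degenerate to a point), and each endpoint of this segment is either an intersection point of an edge of Δ with Δ', or an intersection point of Δ with an edge of Δ'. -/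
open Set RealInnerProductSpace

local notation "E3" => EuclideanSpace ℝ (Fin 3)

lemma hull3_mem_iff (v : Fin 3 → E3) (x : E3) :
    x ∈ convexHull ℝ (Set.range v) ↔
      ∃ c : Fin 3 → ℝ, (∀ i, 0 ≤ c i) ∧ ∑ i, c i = 1 ∧ ∑ i, c i • v i = x := by
  constructor
  · intro hx
    rw [convexHull_range_eq_exists_affineCombination] at hx
    obtain ⟨s, wt, h0, h1, h2⟩ := hx
    classical
    refine ⟨fun i => if i ∈ s then wt i else 0, fun i => by by_cases h : i ∈ s <;> simp [h, h0, *], ?_, ?_⟩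
    · rw [Finset.sum_ite_mem, Finset.univ_inter, h1]
    · rw [← h2, Finset.affineCombination_eq_linear_combination s v wt h1]
      rw [← Finset.sum_filter_add_sum_filter_not Finset.univ (· ∈ s)]
      have h3 : ∀ i ∈ Finset.univ.filter (· ∈ s), (if i ∈ s then wt i else 0) • v i = wt i • v i := by
        intro i hi; rw [Finset.mem_filter] at hi; rw [if_pos hi.2]
      have h4 : ∀ i ∈ Finset.univ.filter (fun i => ¬ i ∈ s), (if i ∈ s then wt i else 0) • v i = (0 : E3) := by
        intro i hi; rw [Finset.mem_filter] at hi; rw [if_neg hi.2, zero_smul]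
      rw [Finset.sum_congr rfl h3, Finset.sum_congr rfl h4, Finset.sum_const_zero, add_zero,
        Finset.filter_mem_eq_inter, Finset.univ_inter]
  · rintro ⟨c, h0, h1, rfl⟩
    have := Finset.centerMass_mem_convexHull (Finset.univ : Finset (Fin 3))
      (w := c) (fun i _ => h0 i) (by rw [h1]; norm_num) (z := v) (fun i _ => Set.mem_range_self i)
    rwa [Finset.centerMass, h1, inv_one, one_smul] at this

lemma move_in_hull (v : Fin 3 → E3) (c : Fin 3 → ℝ)
    (hc : ∀ i, 0 < c i) (h1 : ∑ i, c i = 1) {u : E3}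
    (hu : u ∈ vectorSpan ℝ (Set.range v)) :
    ∃ ε > 0, ∀ t : ℝ, |t| ≤ ε → (∑ i, c i • v i) + t • u ∈ convexHull ℝ (Set.range v) := by
  rw [vectorSpan_range_eq_span_range_vsub_right ℝ v 0, Submodule.mem_span_range_iff_exists_fun] at hu
  obtain ⟨a, ha⟩ := hu
  classical
  set b : Fin 3 → ℝ := fun i => a i - (if i = 0 then (∑ j, a j) else 0) with hb
  have hb0 : ∑ i, b i = 0 := by
    simp [hb, Fin.sum_univ_three]
  have hbu : ∑ i, b i • v i = u := by
    rw [← ha]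
    simp [hb, Fin.sum_univ_three]
    module
  have hεi : ∀ i, (0:ℝ) < c i / (|b i| + 1) := fun i => div_pos (hc i) (by positivity)
  refine ⟨min (c 0 / (|b 0| + 1)) (min (c 1 / (|b 1| + 1)) (c 2 / (|b 2| + 1))),
    lt_min (hεi 0) (lt_min (hεi 1) (hεi 2)), ?_⟩
  intro t ht
  set ε := min (c 0 / (|b 0| + 1)) (min (c 1 / (|b 1| + 1)) (c 2 / (|b 2| + 1))) with hε
  have hεb : ∀ i, ε ≤ c i / (|b i| + 1) := by
    intro i
    fin_cases i
    · exact min_le_left _ _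
    · exact le_trans (min_le_right _ _) (min_le_left _ _)
    · exact le_trans (min_le_right _ _) (min_le_right _ _)
  rw [hull3_mem_iff]
  refine ⟨fun i => c i + t * b i, ?_, ?_, ?_⟩
  · intro i
    show 0 ≤ c i + t * b i
    have hi : ε * (|b i| + 1) ≤ c i := by
      rw [← le_div_iff₀ (by positivity)]; exact hεb i
    have h2 : |t| * |b i| ≤ ε * (|b i| + 1) := by
      have := abs_le.mp ht
      nlinarith [abs_nonneg (b i), abs_nonneg t]
    nlinarith [neg_abs_le (t * b i), abs_mul t (b i)]
  · rw [Finset.sum_add_distrib, h1, ← Finset.mul_sum, hb0, mul_zero, add_zero]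
  · simp only [add_smul, Finset.sum_add_distrib, mul_smul]
    rw [← Finset.smul_sum, hbu]

lemma endpoint_contra {x y z d : E3} {t : ℝ} (hz : z = x ∨ z = y) (hd : d ≠ 0) (ht : 0 < t)
    (h1 : z + t • d ∈ segment ℝ x y) (h2 : z - t • d ∈ segment ℝ x y) : False := by
  have key : ∀ x' y' : E3, z = x' →
      z + t • d ∈ segment ℝ x' y' → z - t • d ∈ segment ℝ x' y' → False := by
    rintro x' y' rfl hp hm
    obtain ⟨a1, b1, ha1, hb1, hab1, he1⟩ := hp
    obtain ⟨a2, b2, ha2, hb2, hab2, he2⟩ := hm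
    have e1 : b1 • (y' - z) = t • d := by
      have : a1 • z + b1 • y' - z = t • d := by rw [he1]; abel
      rw [← this]
      have : a1 = 1 - b1 := by linarith
      rw [this]; module
    have e2 : b2 • (y' - z) = -(t • d) := by
      have : a2 • z + b2 • y' - z = -(t • d) := by
        rw [he2]; abel
      rw [← this]
      have : a2 = 1 - b2 := by linarith
      rw [this]; module
    have hsum : (b1 + b2) • (y' - z) = 0 := by
      rw [add_smul, e1, e2]; abel
    have hy : y' - z ≠ 0 ∨ b1 + b2 = 0 := by
      rcases smul_eq_zero.mp hsum with h | h
      · right; exact h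
      · left; simp [sub_eq_zero] at h
        subst h
        exfalso
        have : t • d = 0 := by rw [← e1]; simp
        rcases smul_eq_zero.mp this with h | h
        · exact absurd h (ne_of_gt ht)
        · exact hd h
    rcases hy with hy | hb
    · rcases smul_eq_zero.mp hsum with h | h
      · have hb1' : b1 = 0 := by linarith
        have : t • d = 0 := by rw [← e1, hb1', zero_smul]
        rcases smul_eq_zero.mp this with h' | h'
        · exact absurd h' (ne_of_gt ht)
        · exact hd h'
      · exact hy h
    · have hb1' : b1 = 0 := by linarith
      have : t • d = 0 := by rw [← e1, hb1', zero_smul]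
      rcases smul_eq_zero.mp this with h' | h'
      · exact absurd h' (ne_of_gt ht)
      · exact hd h'
  rcases hz with h | h
  · exact key x y h h1 h2
  · exact key y x h (segment_symm ℝ x y ▸ h1) (segment_symm ℝ x y ▸ h2)

lemma seg_of_zero_coord (v : Fin 3 → E3) (c : Fin 3 → ℝ) (hc0 : ∀ i, 0 ≤ c i)
    (h1 : ∑ i, c i = 1) (i : Fin 3) (hi : c i = 0) :
    ∃ j k, j ≠ k ∧ (∑ i, c i • v i) ∈ segment ℝ (v j) (v k) := by
  rw [Fin.sum_univ_three] at h1
  fin_cases i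
  · have hi' : c 0 = 0 := hi
    exact ⟨1, 2, by decide, c 1, c 2, hc0 1, hc0 2, by rw [hi'] at h1; linarith,
      by rw [Fin.sum_univ_three, hi', zero_smul, zero_add]⟩
  · have hi' : c 1 = 0 := hi
    exact ⟨0, 2, by decide, c 0, c 2, hc0 0, hc0 2, by rw [hi'] at h1; linarith,
      by rw [Fin.sum_univ_three, hi', zero_smul, add_zero]⟩
  · have hi' : c 2 = 0 := hi
    exact ⟨0, 1, by decide, c 0, c 1, hc0 0, hc0 1, by rw [hi'] at h1; linarith,
      by rw [Fin.sum_univ_three, hi', zero_smul, add_zero]⟩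


/-- Two closed triangles in `ℝ³` (convex hulls of affinely independent triples `v`, `w`)
lying in distinct, non-parallel planes, such that no vertex of either lies on the plane
of the other: if their intersection is nonempty, then it is a closed segment (possibly a
point), each of whose endpoints is an intersection of an edge of one triangle with the
other triangle. -/
theorem stmt2 (v w : Fin 3 → EuclideanSpace ℝ (Fin 3))
    (hv : AffineIndependent ℝ v) (hw : AffineIndependent ℝ w)
    (hdistinct : affineSpan ℝ (Set.range v) ≠ affineSpan ℝ (Set.range w))
    (hnonpar : (affineSpan ℝ (Set.range v)).direction ≠
      (affineSpan ℝ (Set.range w)).direction)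
    (hvert1 : ∀ i, v i ∉ affineSpan ℝ (Set.range w))
    (hvert2 : ∀ i, w i ∉ affineSpan ℝ (Set.range v))
    (hne : (convexHull ℝ (Set.range v) ∩ convexHull ℝ (Set.range w)).Nonempty) :
    ∃ x y : EuclideanSpace ℝ (Fin 3),
      convexHull ℝ (Set.range v) ∩ convexHull ℝ (Set.range w) = segment ℝ x y ∧
      ∀ z ∈ ({x, y} : Set (EuclideanSpace ℝ (Fin 3))),
        (∃ i j, i ≠ j ∧ z ∈ segment ℝ (v i) (v j) ∧
          z ∈ convexHull ℝ (Set.range w)) ∨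
        (∃ i j, i ≠ j ∧ z ∈ segment ℝ (w i) (w j) ∧
          z ∈ convexHull ℝ (Set.range v)) := by
  classical
  set Pd := (affineSpan ℝ (Set.range v)).direction with hPddef
  set Qd := (affineSpan ℝ (Set.range w)).direction with hQddef
  set S := convexHull ℝ (Set.range v) ∩ convexHull ℝ (Set.range w) with hSdef
  have hE3 : Module.finrank ℝ (EuclideanSpace ℝ (Fin 3)) = 3 := by
    simp [finrank_euclideanSpace]
  have hPd : Module.finrank ℝ Pd = 2 := by
    rw [hPddef, direction_affineSpan]
    have := hv.finrank_vectorSpan (by simp : Fintype.card (Fin 3) = 2 + 1)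
    exact this
  have hQd : Module.finrank ℝ Qd = 2 := by
    rw [hQddef, direction_affineSpan]
    exact hw.finrank_vectorSpan (by simp : Fintype.card (Fin 3) = 2 + 1)
  -- the intersection of directions is one-dimensional
  have hsup : Module.finrank ℝ (Pd ⊔ Qd : Submodule ℝ (EuclideanSpace ℝ (Fin 3))) = 3 := by
    have hlt : Pd < Pd ⊔ Qd := by
      refine lt_of_le_of_ne le_sup_left (fun h => hnonpar ?_)
      have hle : Qd ≤ Pd := h ▸ le_sup_right
      exact (Submodule.eq_of_le_of_finrank_eq hle (by rw [hPd, hQd])).symm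
    have h1 := Submodule.finrank_lt_finrank_of_lt hlt
    have h2 := (Pd ⊔ Qd).finrank_le
    rw [hE3] at h2
    rw [hPd] at h1
    omega
  have hinf : Module.finrank ℝ (Pd ⊓ Qd : Submodule ℝ (EuclideanSpace ℝ (Fin 3))) = 1 := by
    have := Submodule.finrank_sup_add_finrank_inf_eq Pd Qd
    rw [hsup, hPd, hQd] at this
    omega
  obtain ⟨d, hdmem, hd0⟩ : ∃ d, d ∈ Pd ⊓ Qd ∧ d ≠ 0 := by
    apply Submodule.exists_mem_ne_zero_of_ne_bot
    intro h
    rw [h, finrank_bot] at hinf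
    omega
  have hspan : (Submodule.span ℝ {d}) = Pd ⊓ Qd := by
    apply Submodule.eq_of_le_of_finrank_eq
    · rwa [Submodule.span_singleton_le_iff_mem]
    · rw [finrank_span_singleton hd0, hinf]
  -- differences of points of S lie in the span of d
  have hSP : ∀ z ∈ S, z ∈ affineSpan ℝ (Set.range v) :=
    fun z hz => convexHull_subset_affineSpan _ hz.1
  have hSQ : ∀ z ∈ S, z ∈ affineSpan ℝ (Set.range w) :=
    fun z hz => convexHull_subset_affineSpan _ hz.2
  have hdiff : ∀ z1 ∈ S, ∀ z2 ∈ S, ∃ cz : ℝ, z1 - z2 = cz • d := by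
    intro z1 hz1 z2 hz2
    have h1 : z1 - z2 ∈ Pd := AffineSubspace.vsub_mem_direction (hSP z1 hz1) (hSP z2 hz2)
    have h2 : z1 - z2 ∈ Qd := AffineSubspace.vsub_mem_direction (hSQ z1 hz1) (hSQ z2 hz2)
    have : z1 - z2 ∈ Submodule.span ℝ {d} := hspan ▸ Submodule.mem_inf.mpr ⟨h1, h2⟩
    obtain ⟨cz, hcz⟩ := Submodule.mem_span_singleton.mp this
    exact ⟨cz, hcz.symm⟩
  obtain ⟨p, hp⟩ := hne
  -- map to ℝ
  set D : ℝ := (inner ℝ d d : ℝ) with hDdef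
  have hD : D ≠ 0 := fun h => hd0 (inner_self_eq_zero.mp h)
  set f : EuclideanSpace ℝ (Fin 3) → ℝ := fun z => (inner ℝ d z : ℝ) with hfdef
  have hScomp : IsCompact S :=
    ((Set.finite_range v).isCompact_convexHull (𝕜 := ℝ)).inter_right
      (((Set.finite_range w).isCompact_convexHull (𝕜 := ℝ)).isClosed)
  have hSconv : Convex ℝ S := (convex_convexHull ℝ _).inter (convex_convexHull ℝ _)
  have hSne : S.Nonempty := ⟨p, hp⟩
  have hfc : Continuous f := (innerSL ℝ d).continuous
  have hIcomp : IsCompact (f '' S) := hScomp.image hfc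
  have hIconv : Convex ℝ (f '' S) := hSconv.linear_image (innerSL ℝ d).toLinearMap
  have hIconn : IsConnected (f '' S) := ⟨hSne.image f, hIconv.isPreconnected⟩
  have hIcc : f '' S = Set.Icc (sInf (f '' S)) (sSup (f '' S)) :=
    eq_Icc_of_connected_compact hIconn hIcomp
  set a := sInf (f '' S) with hadef
  set b := sSup (f '' S) with hbdef
  have hab : a ≤ b := Set.nonempty_Icc.mp (hIcc ▸ hSne.image f)
  -- affine parametrization of the line
  set g : ℝ →ᵃ[ℝ] EuclideanSpace ℝ (Fin 3) :=
    AffineMap.lineMap (p - (f p * D⁻¹) • d) ((p - (f p * D⁻¹) • d) + D⁻¹ • d) with hgdef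
  have hgt : ∀ t : ℝ, g t = p + ((t - f p) * D⁻¹) • d := by
    intro t
    rw [hgdef, AffineMap.lineMap_apply]
    simp only [vsub_eq_sub, vadd_eq_add]
    module
  have hgf : ∀ z ∈ S, g (f z) = z := by
    intro z hz
    obtain ⟨cz, hcz⟩ := hdiff z hz p hp
    have hfz : f z - f p = cz * D := by
      rw [hfdef, hDdef]
      simp only []
      rw [← inner_sub_right, hcz, real_inner_smul_right]
    rw [hgt, hfz, mul_assoc, mul_inv_cancel₀ hD, mul_one, ← hcz]
    abel
  have hSseg : S = segment ℝ (g a) (g b) := by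
    rw [← image_segment ℝ g a b, segment_eq_Icc hab, ← hIcc]
    apply Set.Subset.antisymm
    · intro z hz
      exact ⟨f z, Set.mem_image_of_mem f hz, hgf z hz⟩
    · rintro _ ⟨t, ht, rfl⟩
      obtain ⟨z, hzS, rfl⟩ := ht
      rw [hgf z hzS]
      exact hzS
  have hxS : g a ∈ S := by
    have ha : a ∈ f '' S := hIcc ▸ Set.left_mem_Icc.mpr hab
    obtain ⟨z, hzS, hz⟩ := ha
    rw [← hz, hgf z hzS]; exact hzS
  have hyS : g b ∈ S := by
    have hb : b ∈ f '' S := hIcc ▸ Set.right_mem_Icc.mpr hab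
    obtain ⟨z, hzS, hz⟩ := hb
    rw [← hz, hgf z hzS]; exact hzS
  refine ⟨g a, g b, hSseg, ?_⟩
  intro z hz
  have hzor : z = g a ∨ z = g b := by
    rcases hz with h | h
    · exact Or.inl h
    · exact Or.inr h
  have hzS : z ∈ S := by rcases hzor with rfl | rfl <;> [exact hxS; exact hyS]
  obtain ⟨c, hc0, hc1, hcx⟩ := (hull3_mem_iff v z).mp hzS.1
  obtain ⟨c', hc0', hc1', hcx'⟩ := (hull3_mem_iff w z).mp hzS.2
  by_cases hex : ∃ i, c i = 0
  · obtain ⟨i, hi⟩ := hex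
    obtain ⟨j, k, hjk, hseg⟩ := seg_of_zero_coord v c hc0 hc1 i hi
    rw [hcx] at hseg
    exact Or.inl ⟨j, k, hjk, hseg, hzS.2⟩
  by_cases hex' : ∃ i, c' i = 0
  · obtain ⟨i, hi⟩ := hex'
    obtain ⟨j, k, hjk, hseg⟩ := seg_of_zero_coord w c' hc0' hc1' i hi
    rw [hcx'] at hseg
    exact Or.inr ⟨j, k, hjk, hseg, hzS.1⟩
  -- contradiction case: z is in the relative interior of both triangles
  exfalso
  push_neg at hex hex'
  have hcpos : ∀ i, 0 < c i := fun i => (hc0 i).lt_of_ne (Ne.symm (hex i))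
  have hcpos' : ∀ i, 0 < c' i := fun i => (hc0' i).lt_of_ne (Ne.symm (hex' i))
  have hdv : d ∈ vectorSpan ℝ (Set.range v) := by
    have := hdmem.1
    rwa [hPddef, direction_affineSpan] at this
  have hdw : d ∈ vectorSpan ℝ (Set.range w) := by
    have := hdmem.2
    rwa [hQddef, direction_affineSpan] at this
  obtain ⟨ε1, hε1, hm1⟩ := move_in_hull v c hcpos hc1 hdv
  obtain ⟨ε2, hε2, hm2⟩ := move_in_hull w c' hcpos' hc1' hdw
  set t := min ε1 ε2 with htdef
  have ht : 0 < t := lt_min hε1 hε2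
  have habs : |t| ≤ ε1 ∧ |t| ≤ ε2 := by
    rw [abs_of_pos ht]
    exact ⟨min_le_left _ _, min_le_right _ _⟩
  have habs' : |(-t)| ≤ ε1 ∧ |(-t)| ≤ ε2 := by
    rw [abs_neg]; exact habs
  have hzp : z + t • d ∈ S := by
    constructor
    · have := hm1 t habs.1; rwa [hcx] at this
    · have := hm2 t habs.2; rwa [hcx'] at this
  have hzm : z - t • d ∈ S := by
    have h1 := hm1 (-t) habs'.1
    have h2 := hm2 (-t) habs'.2
    rw [hcx] at h1; rw [hcx'] at h2
    rw [neg_smul, ← sub_eq_add_neg] at h1 h2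
    exact ⟨h1, h2⟩
  rw [hSseg] at hzp hzm
  exact endpoint_contra hzor hd0 ht hzp hzm
end

section
/- Let Δ and Δ' be two closed triangles in ℝ³ with nonempty intersection, lying in distinct planes. Then either some edge of Δ intersects Δ', or some edge of Δ' intersects Δ. -/
open Finset in
lemma mem_hull_iff3 (p : Fin 3 → EuclideanSpace ℝ (Fin 3)) (x : EuclideanSpace ℝ (Fin 3)) :
    x ∈ convexHull ℝ (Set.range p) ↔
      ∃ c : Fin 3 → ℝ, (∀ i, 0 ≤ c i) ∧ ∑ i, c i = 1 ∧ ∑ i, c i • p i = x := by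
  rw [convexHull_range_eq_exists_affineCombination]
  constructor
  · rintro ⟨s, w, h0, h1, hx⟩
    refine ⟨fun i => if i ∈ s then w i else 0,
      fun i => by dsimp only; split; exacts [h0 _ ‹_›, le_refl 0], ?_, ?_⟩
    · rw [Finset.sum_ite_mem, Finset.univ_inter, h1]
    · rw [← hx, Finset.affineCombination_eq_linear_combination s p w h1]
      simp only [ite_smul, zero_smul, Finset.sum_ite_mem, Finset.univ_inter]
  · rintro ⟨c, h0, h1, hx⟩
    exact ⟨Finset.univ, c, fun i _ => h0 i, h1, by
      rw [Finset.affineCombination_eq_linear_combination _ p c h1, hx]⟩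

lemma mem_span_rep3 (p : Fin 3 → EuclideanSpace ℝ (Fin 3)) (d : EuclideanSpace ℝ (Fin 3))
    (hd : d ∈ vectorSpan ℝ (Set.range p)) :
    ∃ δ : Fin 3 → ℝ, ∑ i, δ i = 0 ∧ ∑ i, δ i • p i = d := by
  rw [mem_vectorSpan_iff_eq_weightedVSub] at hd
  obtain ⟨s, w, h0, hx⟩ := hd
  refine ⟨fun i => if i ∈ s then w i else 0, ?_, ?_⟩
  · rw [Finset.sum_ite_mem, Finset.univ_inter, h0]
  · rw [hx, Finset.weightedVSub_eq_linear_combination s h0]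
    simp only [ite_smul, zero_smul, Finset.sum_ite_mem, Finset.univ_inter]

/-- If a point of the triangle has some zero barycentric coordinate, it is on an edge. -/
lemma on_edge_of_coord_zero (p : Fin 3 → EuclideanSpace ℝ (Fin 3))
    {c : Fin 3 → ℝ} {x : EuclideanSpace ℝ (Fin 3)} (h0 : ∀ i, 0 ≤ c i)
    (h1 : ∑ i, c i = 1) (hx : ∑ i, c i • p i = x) {i : Fin 3} (hi : c i = 0) :
    ∃ j k, j ≠ k ∧ x ∈ segment ℝ (p j) (p k) := by
  rw [Fin.sum_univ_three] at h1 hx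
  fin_cases i <;> simp only [Fin.isValue, Fin.zero_eta, Fin.mk_one, Fin.reduceFinMk] at hi <;>
    rw [hi, zero_smul] at hx <;> rw [hi] at h1
  · exact ⟨1, 2, by decide, c 1, c 2, h0 1, h0 2, by linarith, by rw [← hx]; abel⟩
  · exact ⟨0, 2, by decide, c 0, c 2, h0 0, h0 2, by linarith, by rw [← hx]; abel⟩
  · exact ⟨0, 1, by decide, c 0, c 1, h0 0, h0 1, by linarith, by rw [← hx]; abel⟩

/-- If two closed triangles in `ℝ³` (convex hulls of affinely independent triples),
lying in distinct planes, have nonempty intersection, then some edge of one of them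
intersects the other triangle. -/
theorem stmt3 (v w : Fin 3 → EuclideanSpace ℝ (Fin 3))
    (hv : AffineIndependent ℝ v) (hw : AffineIndependent ℝ w)
    (hdistinct : affineSpan ℝ (Set.range v) ≠ affineSpan ℝ (Set.range w))
    (hne : (convexHull ℝ (Set.range v) ∩ convexHull ℝ (Set.range w)).Nonempty) :
    (∃ i j, i ≠ j ∧
      (segment ℝ (v i) (v j) ∩ convexHull ℝ (Set.range w)).Nonempty) ∨
    (∃ i j, i ≠ j ∧
      (segment ℝ (w i) (w j) ∩ convexHull ℝ (Set.range v)).Nonempty) := by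
  classical
  obtain ⟨x, hxv, hxw⟩ := hne
  set V := vectorSpan ℝ (Set.range v) with hV
  set W := vectorSpan ℝ (Set.range w) with hW
  -- the directions are distinct
  have hVW : V ≠ W := by
    intro h
    apply hdistinct
    refine AffineSubspace.ext_of_direction_eq ?_ ⟨x, ?_, ?_⟩
    · rw [direction_affineSpan, direction_affineSpan]; exact h
    · exact convexHull_subset_affineSpan _ hxv
    · exact convexHull_subset_affineSpan _ hxw
  -- a nonzero common direction
  have hdimV : Module.finrank ℝ V = 2 := hv.finrank_vectorSpan (by simp)
  have hdimW : Module.finrank ℝ W = 2 := hw.finrank_vectorSpan (by simp)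
  have hinf : 0 < Module.finrank ℝ ↥(V ⊓ W) := by
    by_contra h
    push_neg at h
    have h0 : Module.finrank ℝ ↥(V ⊓ W) = 0 := Nat.le_zero.mp h
    have := Submodule.finrank_sup_add_finrank_inf_eq V W
    have hle : Module.finrank ℝ ↥(V ⊔ W) ≤ 3 := by
      have := Submodule.finrank_le (V ⊔ W)
      simpa [finrank_euclideanSpace_fin] using this
    omega
  have hnebot : V ⊓ W ≠ ⊥ := by
    intro hbot
    rw [hbot] at hinf
    simp at hinf
  obtain ⟨d, hdVW, hd0⟩ : ∃ d ∈ V ⊓ W, d ≠ 0 :=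
    Submodule.exists_mem_ne_zero_of_ne_bot hnebot
  have hdV : d ∈ V := hdVW.1
  have hdW : d ∈ W := hdVW.2
  -- maximize ⟪d, ·⟫ over the (compact) intersection
  set K := convexHull ℝ (Set.range v) ∩ convexHull ℝ (Set.range w) with hK
  have hKc : IsCompact K :=
    ((Set.finite_range v).isCompact_convexHull ℝ).inter_right
      (((Set.finite_range w).isCompact_convexHull ℝ).isClosed)
  obtain ⟨a, haK, hamax⟩ :=
    hKc.exists_isMaxOn ⟨x, hxv, hxw⟩
      ((continuous_const.inner continuous_id).continuousOn
        (f := fun y : EuclideanSpace ℝ (Fin 3) => (inner ℝ d y : ℝ)))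
  obtain ⟨c, hc0, hc1, hca⟩ := (mem_hull_iff3 v a).mp haK.1
  obtain ⟨c', hc'0, hc'1, hc'a⟩ := (mem_hull_iff3 w a).mp haK.2
  -- if some barycentric coordinate vanishes, we are done
  by_cases hzero : (∃ i, c i = 0) ∨ (∃ i, c' i = 0)
  · rcases hzero with ⟨i, hi⟩ | ⟨i, hi⟩
    · obtain ⟨j, k, hjk, hseg⟩ := on_edge_of_coord_zero v hc0 hc1 hca hi
      exact Or.inl ⟨j, k, hjk, a, hseg, haK.2⟩
    · obtain ⟨j, k, hjk, hseg⟩ := on_edge_of_coord_zero w hc'0 hc'1 hc'a hi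
      exact Or.inr ⟨j, k, hjk, a, hseg, haK.1⟩
  -- otherwise all coordinates are positive; derive a contradiction with maximality
  exfalso
  push_neg at hzero
  obtain ⟨hcz, hc'z⟩ := hzero
  have hcpos : ∀ i, 0 < c i := fun i => (hc0 i).lt_of_ne (fun h => hcz i h.symm)
  have hc'pos : ∀ i, 0 < c' i := fun i => (hc'0 i).lt_of_ne (fun h => hc'z i h.symm)
  obtain ⟨δ, hδ0, hδd⟩ := mem_span_rep3 v d hdV
  obtain ⟨δ', hδ'0, hδ'd⟩ := mem_span_rep3 w d hdW
  -- find small ε > 0 keeping all perturbed coordinates nonnegative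
  have hev : ∀ᶠ ε in nhdsWithin (0:ℝ) (Set.Ioi 0),
      (∀ i, 0 ≤ c i + ε * δ i) ∧ (∀ i, 0 ≤ c' i + ε * δ' i) := by
    have key : ∀ (b e : ℝ), 0 < b → ∀ᶠ ε in nhdsWithin (0:ℝ) (Set.Ioi 0), 0 ≤ b + ε * e := by
      intro b e hb
      have ht : Filter.Tendsto (fun ε : ℝ => b + ε * e) (nhdsWithin 0 (Set.Ioi 0)) (nhds b) := by
        have : Filter.Tendsto (fun ε : ℝ => b + ε * e) (nhds 0) (nhds (b + 0 * e)) := by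
          exact (continuous_const.add (continuous_id.mul continuous_const)).tendsto 0
        simpa using this.mono_left nhdsWithin_le_nhds
      exact ht.eventually (eventually_ge_nhds hb)
    refine Filter.Eventually.and ?_ ?_ <;>
      · rw [Filter.eventually_all]
        intro i
        first
        | exact key (c i) (δ i) (hcpos i)
        | exact key (c' i) (δ' i) (hc'pos i)
  obtain ⟨ε, ⟨hεc, hεc'⟩, hεpos⟩ := (hev.and self_mem_nhdsWithin).exists
  -- the point a + ε • d lies in both triangles
  have hmem : ∀ (p : Fin 3 → EuclideanSpace ℝ (Fin 3)) (cc δδ : Fin 3 → ℝ),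
      (∀ i, 0 ≤ cc i + ε * δδ i) → ∑ i, cc i = 1 → ∑ i, δδ i = 0 →
      ∑ i, cc i • p i = a → ∑ i, δδ i • p i = d →
      a + ε • d ∈ convexHull ℝ (Set.range p) := by
    intro p cc δδ hnn h1 h0 ha hd
    refine (mem_hull_iff3 p _).mpr ⟨fun i => cc i + ε * δδ i, hnn, ?_, ?_⟩
    · rw [Finset.sum_add_distrib, h1, ← Finset.mul_sum, h0, mul_zero, add_zero]
    · calc ∑ i, (cc i + ε * δδ i) • p i
          = ∑ i, cc i • p i + ε • ∑ i, δδ i • p i := by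
            rw [Finset.smul_sum, ← Finset.sum_add_distrib]
            congr 1; ext i; rw [add_smul, mul_smul]
        _ = a + ε • d := by rw [ha, hd]
  have hin : a + ε • d ∈ K :=
    ⟨hmem v c δ hεc hc1 hδ0 hca hδd, hmem w c' δ' hεc' hc'1 hδ'0 hc'a hδ'd⟩
  have := hamax hin
  simp only [Set.mem_setOf_eq] at this
  have hcalc : (inner ℝ d (a + ε • d) : ℝ) = inner ℝ d a + ε * ‖d‖ ^ 2 := by
    rw [inner_add_right, inner_smul_right, real_inner_self_eq_norm_sq]
  rw [hcalc] at this
  nlinarith [mul_pos hεpos (pow_pos (norm_pos_iff.mpr hd0) 2)]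
end

section
/- Let γ be a directed circular arc of angular span at most π/2 with endpoints p, q lying strictly on the same side of a plane h, and suppose the tangent of γ at p (oriented into γ) or the tangent at q (oriented into γ, i.e., opposite to traversal) forms an angle of at least π/2 with the unit normal of h pointing away from the side containing p and q. Then if the complementary arc of γ in its circle crosses h, γ itself does not cross h. -/
open scoped RealInnerProductSpace

lemma auxC (B C α θ : ℝ) (h0 : 0 ≤ θ) (hθα : θ ≤ α) (hα : α ≤ Real.pi / 2)
    (hC : C ≤ 0) :
    B * Real.cos θ + C * Real.sin θ ≤ B ∨
    B * Real.cos θ + C * Real.sin θ ≤ B * Real.cos α + C * Real.sin α := by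
  have hπ : (0:ℝ) < Real.pi := Real.pi_pos
  have hsT : 0 ≤ Real.sin (θ/2) :=
    Real.sin_nonneg_of_nonneg_of_le_pi (by linarith) (by linarith)
  have hcT : 0 ≤ Real.cos (θ/2) := Real.cos_nonneg_of_mem_Icc ⟨by linarith, by linarith⟩
  have hcosθ : Real.cos θ = 1 - 2 * Real.sin (θ/2) ^ 2 := by
    have h := Real.cos_two_mul' (θ/2)
    rw [show 2 * (θ/2) = θ by ring] at h
    linear_combination h + Real.sin_sq_add_cos_sq (θ/2)
  have hsinθ : Real.sin θ = 2 * Real.sin (θ/2) * Real.cos (θ/2) := by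
    have h := Real.sin_two_mul (θ/2); rw [show 2 * (θ/2) = θ by ring] at h; linarith
  rcases le_or_gt (C * Real.cos (θ/2)) (B * Real.sin (θ/2)) with h1 | h1
  · left
    have expand : B * Real.cos θ + C * Real.sin θ - B =
        2 * Real.sin (θ/2) * (C * Real.cos (θ/2) - B * Real.sin (θ/2)) := by
      rw [hcosθ, hsinθ]; ring
    nlinarith [mul_nonneg hsT (sub_nonneg.2 h1)]
  · right
    have hsTpos : 0 < Real.sin (θ/2) := by
      rcases lt_or_eq_of_le hsT with h | h
      · exact h
      · exfalso
        have hcTpos : 0 < Real.cos (θ/2) := by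
          nlinarith [Real.sin_sq_add_cos_sq (θ/2)]
        rw [← h] at h1
        nlinarith
    set m := (α + θ) / 2 with hm
    have hsm : 0 ≤ Real.sin m := Real.sin_nonneg_of_nonneg_of_le_pi (by rw [hm]; linarith)
      (by rw [hm]; linarith)
    have hcm : 0 ≤ Real.cos m := Real.cos_nonneg_of_mem_Icc ⟨by rw [hm]; linarith, by rw [hm]; linarith⟩
    have hsd : 0 ≤ Real.sin ((α - θ)/2) :=
      Real.sin_nonneg_of_nonneg_of_le_pi (by linarith) (by linarith)
    have hsub : Real.sin m * Real.cos (θ/2) - Real.cos m * Real.sin (θ/2) = Real.sin (α/2) := by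
      rw [← Real.sin_sub, hm]; ring_nf
    have hsa : 0 ≤ Real.sin (α/2) :=
      Real.sin_nonneg_of_nonneg_of_le_pi (by linarith) (by linarith)
    have key : B * Real.sin m ≤ C * Real.cos m := by
      have h2 : C * (Real.sin m * Real.cos (θ/2)) ≤ C * (Real.cos m * Real.sin (θ/2)) := by
        apply mul_le_mul_of_nonpos_left _ hC
        linarith
      have h3 : B * Real.sin (θ/2) * Real.sin m ≤ C * Real.cos (θ/2) * Real.sin m :=
        mul_le_mul_of_nonneg_right h1.le hsm
      have h4 : B * Real.sin m * Real.sin (θ/2) ≤ C * Real.cos m * Real.sin (θ/2) := by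
        nlinarith
      exact le_of_mul_le_mul_right (by linarith [h4]) hsTpos
    have hcc : Real.cos α - Real.cos θ = -2 * Real.sin m * Real.sin ((α - θ)/2) := by
      rw [Real.cos_sub_cos]
    have hss : Real.sin α - Real.sin θ = 2 * Real.sin ((α - θ)/2) * Real.cos m := by
      rw [Real.sin_sub_sin]
    have expand2 : (B * Real.cos α + C * Real.sin α) - (B * Real.cos θ + C * Real.sin θ) =
        2 * Real.sin ((α - θ)/2) * (C * Real.cos m - B * Real.sin m) := by
      linear_combination B * hcc + C * hss
    nlinarith [mul_nonneg hsd (sub_nonneg.2 key)]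

lemma auxMax (B C α θ : ℝ) (h0 : 0 ≤ θ) (hθα : θ ≤ α) (hα : α ≤ Real.pi / 2)
    (htan : C ≤ 0 ∨ B * Real.sin α - C * Real.cos α ≤ 0) :
    B * Real.cos θ + C * Real.sin θ ≤ B ∨
    B * Real.cos θ + C * Real.sin θ ≤ B * Real.cos α + C * Real.sin α := by
  rcases htan with hC | hC
  · exact auxC B C α θ h0 hθα hα hC
  · have h := auxC (B * Real.cos α + C * Real.sin α) (B * Real.sin α - C * Real.cos α)
      α (α - θ) (by linarith) (by linarith) hα hC
    have e1 : (B * Real.cos α + C * Real.sin α) * Real.cos (α - θ)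
        + (B * Real.sin α - C * Real.cos α) * Real.sin (α - θ)
        = B * Real.cos θ + C * Real.sin θ := by
      rw [Real.cos_sub, Real.sin_sub]
      linear_combination (B * Real.cos θ + C * Real.sin θ) * Real.sin_sq_add_cos_sq α
    have e2 : (B * Real.cos α + C * Real.sin α) * Real.cos α
        + (B * Real.sin α - C * Real.cos α) * Real.sin α = B := by
      linear_combination B * Real.sin_sq_add_cos_sq α
    rw [e1, e2] at h
    tauto

/-- Let `γ` be a directed circular arc of angular span `α ≤ π/2` whose endpoints
`p = arcPt o u v r 0` and `q = arcPt o u v r α` lie strictly on the side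
`{x | ⟪n,x⟫ < c}` of the plane `h` (so the unit normal `n` points away from that side).
If the tangent of `γ` at `p` oriented into `γ` (namely `v`), or the tangent at `q`
oriented into `γ` (namely `sin α • u - cos α • v`), forms an angle of at least `π/2`
with `n`, and the complementary arc of `γ` crosses `h`, then `γ` does not cross `h`. -/
theorem stmt19 (o u v n : EuclideanSpace ℝ (Fin 3)) (r α c : ℝ)
    (hr : 0 < r) (hu : ‖u‖ = 1) (hv : ‖v‖ = 1) (huv : ⟪u, v⟫ = 0)
    (hα : 0 < α) (hα' : α ≤ Real.pi / 2) (hn : ‖n‖ = 1)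
    (hp : ⟪n, arcPt o u v r 0⟫ < c)
    (hq : ⟪n, arcPt o u v r α⟫ < c)
    (htan : ⟪n, v⟫ ≤ 0 ∨ ⟪n, Real.sin α • u - Real.cos α • v⟫ ≤ 0)
    (hcomp : (∃ θ ∈ Set.Icc α (2 * Real.pi), ⟪n, arcPt o u v r θ⟫ < c) ∧
             (∃ θ ∈ Set.Icc α (2 * Real.pi), c < ⟪n, arcPt o u v r θ⟫)) :
    ¬ ((∃ θ ∈ Set.Icc (0 : ℝ) α, ⟪n, arcPt o u v r θ⟫ < c) ∧
       (∃ θ ∈ Set.Icc (0 : ℝ) α, c < ⟪n, arcPt o u v r θ⟫)) := by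
  have hinner : ∀ θ : ℝ, ⟪n, arcPt o u v r θ⟫ =
      ⟪n, o⟫ + ((r * ⟪n, u⟫) * Real.cos θ + (r * ⟪n, v⟫) * Real.sin θ) := by
    intro θ
    simp only [arcPt, inner_add_right, real_inner_smul_right]
    ring
  rintro ⟨-, θ, ⟨hθ0, hθα⟩, hgt⟩
  have htan' : r * ⟪n, v⟫ ≤ 0 ∨
      (r * ⟪n, u⟫) * Real.sin α - (r * ⟪n, v⟫) * Real.cos α ≤ 0 := by
    rcases htan with h | h
    · left; exact mul_nonpos_of_nonneg_of_nonpos hr.le h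
    · right
      have : ⟪n, Real.sin α • u - Real.cos α • v⟫ =
          ⟪n, u⟫ * Real.sin α - ⟪n, v⟫ * Real.cos α := by
        simp only [inner_sub_right, real_inner_smul_right]; ring
      rw [this] at h
      nlinarith
  have h := auxMax (r * ⟪n, u⟫) (r * ⟪n, v⟫) α θ hθ0 hθα hα' htan'
  rw [hinner θ] at hgt
  rw [hinner 0] at hp
  rw [hinner α] at hq
  simp only [Real.cos_zero, Real.sin_zero] at hp
  rcases h with h | h <;> linarith
end
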